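/- arXiv:1403.7013 — 3 statements merged into one kernel-verified Lean document; each statement's English description precedes it below -/
import Mathlib

section
/- Let A be an n×n complex matrix with Hermitian part H = (A + A^H)/2 positive definite and skew-Hermitian part S = (A - A^H)/2, and let α > 0. Then the spectral radius of the HSS iteration matrix M(α) = (αI + S)^{-1}(αI - H)(αI + H)^{-1}(αI - S) is strictly less than 1. -/
/-!
Let `M v = μ v` with `v ≠ 0` and put `w = (αI + H)⁻¹ (αI - S) v`, so that `(αI + H) w = (αI - S) v`
and `(αI - H) w = μ (αI + S) v`. For any `B` and real `c`,
`‖(cI + B) x‖² - ‖(cI - B) x‖² = 2c xᴴ (B + Bᴴ) x`. Hence `‖(αI - S) v‖ = ‖(αI + S) v‖` because `S`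
is skew-Hermitian, and `‖(αI - H) w‖ < ‖(αI + H) w‖` because `H` is positive definite and `w ≠ 0`.
Together, `|μ| ‖(αI + S) v‖ < ‖(αI + S) v‖`, so `|μ| < 1`; the spectrum being finite, the spectral
radius is below `1` as well.
-/

open Matrix ComplexOrder

open scoped ENNReal NNReal

namespace spectrum

theorem spectralRadius_lt_of_finite_of_forall_lt {𝕜 A : Type*} [NormedField 𝕜] [Ring A]
    [Algebra 𝕜 A] {a : A} (ha : (spectrum 𝕜 a).Finite) {r : ℝ≥0} (hr₀ : 0 < r)
    (hr : ∀ k ∈ spectrum 𝕜 a, ‖k‖₊ < r) : spectralRadius 𝕜 a < r := by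
  rw [spectralRadius, ← ha.coe_toFinset]
  simp_rw [Finset.mem_coe]
  rw [← Finset.sup_eq_iSup, Finset.sup_lt_iff (bot_lt_iff_ne_bot.2 (by simpa using hr₀.ne'))]
  intro k hk
  exact_mod_cast hr k (ha.mem_toFinset.1 hk)

end spectrum

namespace Matrix

variable {ι : Type*} [Fintype ι]

lemma star_mulVec_dotProduct_mulVec (B : Matrix ι ι ℂ) (v : ι → ℂ) :
    star (B *ᵥ v) ⬝ᵥ (B *ᵥ v) = star v ⬝ᵥ (Bᴴ * B) *ᵥ v := by
  rw [star_mulVec, ← mulVec_mulVec, dotProduct_mulVec (star v) Bᴴ]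

variable [DecidableEq ι]

lemma isUnit_of_posDef_add_conjTranspose {B : Matrix ι ι ℂ} (hB : (B + Bᴴ).PosDef) :
    IsUnit B := by
  rw [isUnit_iff_isUnit_det, isUnit_iff_ne_zero, ne_eq, ← exists_mulVec_eq_zero_iff]
  rintro ⟨v, hv, hBv⟩
  have := hB.dotProduct_mulVec_pos hv
  rw [add_mulVec, dotProduct_add, hBv, dotProduct_zero, zero_add,
    dotProduct_mulVec, ← star_mulVec, hBv, star_zero, zero_dotProduct] at this
  exact this.false

lemma isUnit_smul_one_add_of_conjTranspose_eq_neg {S : Matrix ι ι ℂ} (hS : Sᴴ = -S) {c : ℝ}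
    (hc : 0 < c) : IsUnit ((c : ℂ) • 1 + S) := by
  refine isUnit_of_posDef_add_conjTranspose ?_
  rw [conjTranspose_add, hS, conjTranspose_smul, conjTranspose_one, Complex.star_def,
    Complex.conj_ofReal, add_add_add_comm, add_neg_cancel, add_zero, ← add_smul]
  exact PosDef.one.smul (by norm_cast; linarith)

lemma star_mulVec_dotProduct_mulVec_smul_one_add_sub (B : Matrix ι ι ℂ) (c : ℝ) (v : ι → ℂ) :
    star (((c : ℂ) • 1 + B) *ᵥ v) ⬝ᵥ (((c : ℂ) • 1 + B) *ᵥ v) -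
        star (((c : ℂ) • 1 - B) *ᵥ v) ⬝ᵥ (((c : ℂ) • 1 - B) *ᵥ v) =
      (2 * c : ℂ) * (star v ⬝ᵥ (B + Bᴴ) *ᵥ v) := by
  have gram : ((c : ℂ) • 1 + B)ᴴ * ((c : ℂ) • 1 + B) - ((c : ℂ) • 1 - B)ᴴ * ((c : ℂ) • 1 - B) =
      (2 * c : ℂ) • (B + Bᴴ) := by
    simp only [conjTranspose_add, conjTranspose_sub, conjTranspose_smul, conjTranspose_one,
      Complex.star_def, Complex.conj_ofReal, add_mul, mul_add, sub_mul, mul_sub, smul_mul_assoc,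
      mul_smul_comm, one_mul, mul_one]
    module
  rw [star_mulVec_dotProduct_mulVec, star_mulVec_dotProduct_mulVec, ← dotProduct_sub,
    ← sub_mulVec, gram, smul_mulVec, dotProduct_smul, smul_eq_mul]

lemma star_mulVec_dotProduct_mulVec_smul_one_sub_lt {H : Matrix ι ι ℂ} (hH : H.PosDef) {c : ℝ}
    (hc : 0 < c) {v : ι → ℂ} (hv : v ≠ 0) :
    star (((c : ℂ) • 1 - H) *ᵥ v) ⬝ᵥ (((c : ℂ) • 1 - H) *ᵥ v) <
      star (((c : ℂ) • 1 + H) *ᵥ v) ⬝ᵥ (((c : ℂ) • 1 + H) *ᵥ v) := by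
  rw [← sub_pos, star_mulVec_dotProduct_mulVec_smul_one_add_sub, hH.1.eq]
  exact mul_pos (by norm_cast; positivity) ((hH.add hH).dotProduct_mulVec_pos hv)

lemma star_mulVec_dotProduct_mulVec_smul_one_sub_eq {S : Matrix ι ι ℂ} (hS : Sᴴ = -S) (c : ℝ)
    (v : ι → ℂ) :
    star (((c : ℂ) • 1 - S) *ᵥ v) ⬝ᵥ (((c : ℂ) • 1 - S) *ᵥ v) =
      star (((c : ℂ) • 1 + S) *ᵥ v) ⬝ᵥ (((c : ℂ) • 1 + S) *ᵥ v) := by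
  rw [eq_comm, ← sub_eq_zero, star_mulVec_dotProduct_mulVec_smul_one_add_sub, hS,
    add_neg_cancel, zero_mulVec, dotProduct_zero, mul_zero]

noncomputable def hssIterationMatrix (H S : Matrix ι ι ℂ) (α : ℝ) : Matrix ι ι ℂ :=
  ((α : ℂ) • 1 + S)⁻¹ * ((α : ℂ) • 1 - H) * ((α : ℂ) • 1 + H)⁻¹ * ((α : ℂ) • 1 - S)

theorem norm_lt_one_of_mem_spectrum_hssIterationMatrix {H S : Matrix ι ι ℂ} (hH : H.PosDef)
    (hS : Sᴴ = -S) {α : ℝ} (hα : 0 < α) {μ : ℂ}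
    (hμ : μ ∈ spectrum ℂ (hssIterationMatrix H S α)) : ‖μ‖ < 1 := by
  set P := (α : ℂ) • (1 : Matrix ι ι ℂ) + S
  set Q := (α : ℂ) • (1 : Matrix ι ι ℂ) - S
  set R := (α : ℂ) • (1 : Matrix ι ι ℂ) + H
  set N := (α : ℂ) • (1 : Matrix ι ι ℂ) - H
  rw [hssIterationMatrix, ← spectrum_toLin', ← Module.End.hasEigenvalue_iff_mem_spectrum] at hμ
  obtain ⟨v, hv⟩ := hμ.exists_hasEigenvector
  have hMv : (P⁻¹ * N * R⁻¹ * Q) *ᵥ v = μ • v := by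
    simpa only [toLin'_apply] using hv.apply_eq_smul
  have hP : IsUnit P.det :=
    (isUnit_iff_isUnit_det _).1 (isUnit_smul_one_add_of_conjTranspose_eq_neg hS hα)
  have hQ : IsUnit Q.det := by
    refine (isUnit_iff_isUnit_det _).1 ?_
    simpa [Q, sub_eq_add_neg] using
      isUnit_smul_one_add_of_conjTranspose_eq_neg (S := -S) (by simp [hS]) hα
  have hR : IsUnit R.det :=
    (isUnit_iff_isUnit_det _).1 ((PosDef.one.smul (by exact_mod_cast hα)).add hH).isUnit
  set w := R⁻¹ *ᵥ (Q *ᵥ v)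
  have hRw : R *ᵥ w = Q *ᵥ v := by rw [mulVec_mulVec, mul_nonsing_inv _ hR, one_mulVec]
  have hNw : N *ᵥ w = μ • (P *ᵥ v) := by
    rw [← mulVec_smul, ← hMv]
    simp only [w, mulVec_mulVec, ← mul_assoc, mul_nonsing_inv _ hP, one_mul]
  have hw : w ≠ 0 := fun hw₀ => hQ.ne_zero <| exists_mulVec_eq_zero_iff.1
    ⟨v, hv.2, by rw [← hRw, hw₀, mulVec_zero]⟩
  have key : (‖μ‖ ^ 2 : ℂ) * (star (P *ᵥ v) ⬝ᵥ (P *ᵥ v)) < star (P *ᵥ v) ⬝ᵥ (P *ᵥ v) := calc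
    _ = star (N *ᵥ w) ⬝ᵥ (N *ᵥ w) := by
      rw [hNw, star_smul, smul_dotProduct, dotProduct_smul, smul_eq_mul, smul_eq_mul, ← mul_assoc,
        Complex.star_def, Complex.conj_mul']
    _ < star (R *ᵥ w) ⬝ᵥ (R *ᵥ w) := star_mulVec_dotProduct_mulVec_smul_one_sub_lt hH hα hw
    _ = _ := by rw [hRw, star_mulVec_dotProduct_mulVec_smul_one_sub_eq hS]
  have hsq : (‖μ‖ ^ 2 : ℂ) < 1 :=
    lt_of_mul_lt_mul_right (key.trans_eq (one_mul _).symm) (dotProduct_star_self_nonneg _)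
  exact (pow_lt_one_iff_of_nonneg (norm_nonneg μ) two_ne_zero).1 (by exact_mod_cast hsq)

theorem spectralRadius_hssIterationMatrix_lt_one {H S : Matrix ι ι ℂ} (hH : H.PosDef)
    (hS : Sᴴ = -S) {α : ℝ} (hα : 0 < α) : spectralRadius ℂ (hssIterationMatrix H S α) < 1 := by
  refine spectrum.spectralRadius_lt_of_finite_of_forall_lt (finite_spectrum _) one_pos
    fun μ hμ => ?_
  exact_mod_cast norm_lt_one_of_mem_spectrum_hssIterationMatrix hH hS hα hμ

end Matrix

theorem hss_spectral_radius_lt_one (n : ℕ) (A : Matrix (Fin n) (Fin n) ℂ) (α : ℝ)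
    (hα : 0 < α)
    (hH : ((1/2 : ℂ) • (A + Aᴴ)).PosDef) :
    spectralRadius ℂ
      (((α : ℂ) • (1 : Matrix (Fin n) (Fin n) ℂ) + (1/2 : ℂ) • (A - Aᴴ))⁻¹ *
       ((α : ℂ) • (1 : Matrix (Fin n) (Fin n) ℂ) - (1/2 : ℂ) • (A + Aᴴ)) *
       ((α : ℂ) • (1 : Matrix (Fin n) (Fin n) ℂ) + (1/2 : ℂ) • (A + Aᴴ))⁻¹ *
       ((α : ℂ) • (1 : Matrix (Fin n) (Fin n) ℂ) - (1/2 : ℂ) • (A - Aᴴ))) < 1 := by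
  have hS : ((1/2 : ℂ) • (A - Aᴴ))ᴴ = -((1/2 : ℂ) • (A - Aᴴ)) := by
    rw [conjTranspose_smul, conjTranspose_sub, conjTranspose_conjTranspose, ← smul_neg, neg_sub]
    norm_num
  exact spectralRadius_hssIterationMatrix_lt_one hH hS hα
end

section
/- Let A be an invertible n×n real matrix with ‖A^{-1}‖₂ < 1 (spectral norm). Then the absolute value equation Ax - |x| = b has a unique solution for every b ∈ ℝⁿ. -/
/-!
Since `A` is invertible, `x` solves `A x - |x| = b` exactly when it is a fixed point of
`T x = A⁻¹ (|x| + b)`. The componentwise absolute value is `1`-Lipschitz for the Euclidean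
distance, so `T` is Lipschitz with constant `‖A⁻¹‖₂ < 1`, and the Banach fixed-point
theorem gives exactly one fixed point.
-/

open Matrix
open scoped Matrix.Norms.L2Operator

theorem ContractingWith.existsUnique_isFixedPt {α : Type*} [MetricSpace α] [CompleteSpace α]
    [Nonempty α] {K : NNReal} {f : α → α} (hf : ContractingWith K f) :
    ∃! x, Function.IsFixedPt f x :=
  ⟨fixedPoint f hf, hf.fixedPoint_isFixedPt, fun _ hx => hf.fixedPoint_unique hx⟩

theorem ContinuousLinearMap.contractingWith_comp_add {𝕜 E : Type*}
    [NontriviallyNormedField 𝕜] [NormedAddCommGroup E] [NormedSpace 𝕜 E] {L : E →L[𝕜] E}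
    (hL : ‖L‖ < 1) {g : E → E} (hg : LipschitzWith 1 g) (b : E) :
    ContractingWith ‖L‖₊ fun x => L (g x + b) :=
  ⟨hL, (L.lipschitz.comp (hg.add (LipschitzWith.const b))).weaken (by simp)⟩

theorem EuclideanSpace.lipschitzWith_abs {ι : Type*} [Fintype ι] :
    LipschitzWith 1 fun x : EuclideanSpace ℝ ι => WithLp.toLp 2 fun i => |x i| := by
  refine LipschitzWith.of_dist_le_mul fun x y => ?_
  simp only [EuclideanSpace.dist_eq, NNReal.coe_one, one_mul, Real.dist_eq]
  exact Real.sqrt_le_sqrt <| Finset.sum_le_sum fun i _ =>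
    pow_le_pow_left₀ (abs_nonneg _) (abs_abs_sub_abs_le_abs_sub _ _) 2

theorem Matrix.mulVec_eq_iff_eq_inv_mulVec {ι R : Type*} [Fintype ι] [DecidableEq ι] [CommRing R]
    {A : Matrix ι ι R} (hA : IsUnit A) {x y : ι → R} : A *ᵥ x = y ↔ x = A⁻¹ *ᵥ y := by
  have hdet := (isUnit_iff_isUnit_det A).mp hA
  constructor
  · rintro rfl; rw [mulVec_mulVec, nonsing_inv_mul _ hdet, one_mulVec]
  · rintro rfl; rw [mulVec_mulVec, mul_nonsing_inv _ hdet, one_mulVec]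

theorem ave_unique_solution (n : ℕ) (A : Matrix (Fin n) (Fin n) ℝ)
    (hA : IsUnit A) (hnorm : ‖A⁻¹‖ < 1) :
    ∀ b : Fin n → ℝ, ∃! x : Fin n → ℝ, A *ᵥ x - (fun i => |x i|) = b := by
  intro b
  let T : EuclideanSpace ℝ (Fin n) → EuclideanSpace ℝ (Fin n) :=
    fun x => toEuclideanCLM (𝕜 := ℝ) A⁻¹ ((WithLp.toLp 2 fun i => |x i|) + WithLp.toLp 2 b)
  -- `‖A⁻¹‖` is by definition the operator norm of `toEuclideanCLM A⁻¹`.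
  have hT : ContractingWith ‖A⁻¹‖₊ T := (toEuclideanCLM (𝕜 := ℝ) A⁻¹).contractingWith_comp_add
    hnorm EuclideanSpace.lipschitzWith_abs _
  have solution_iff_isFixedPt (x : Fin n → ℝ) :
      A *ᵥ x - (fun i => |x i|) = b ↔ Function.IsFixedPt T (WithLp.toLp 2 x) := by
    rw [sub_eq_iff_eq_add', mulVec_eq_iff_eq_inv_mulVec hA, eq_comm, Function.IsFixedPt]
    dsimp only [T]
    rw [← WithLp.toLp_add, toEuclideanCLM_toLp, (WithLp.toLp_injective 2).eq_iff]
  exact ((WithLp.equiv 2 _).symm.existsUnique_congr solution_iff_isFixedPt).mpr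
    hT.existsUnique_isFixedPt
end

section
/- If x* satisfies Ax* - |x*| = b, then x* is a fixed point of one full step of the nonlinear HSS-like iteration: with U(x) = (αI + H)^{-1}((αI - S)x + |x| + b) and V(x) = (αI + S)^{-1}((αI - H)x + |x| + b), one has V(U(x*)) = x*. -/
open Matrix

/-!
At a solution, `|x*| + b = A x*`. Hence for any splitting `A = P - Q` with `P` invertible,
`P⁻¹ (Q x* + |x*| + b) = P⁻¹ P x* = x*`; both half-steps are of this form, with
`P = αI + H, Q = αI - S` and `P = αI + S, Q = αI - H`. Both `P` are invertible because their
symmetric parts, `αI + H` and `αI`, are positive definite.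
-/

namespace Matrix

variable {n R : Type*} [Fintype n] [DecidableEq n]

theorem isUnit_of_posDef_add_transpose [Field R] [PartialOrder R] [StarRing R]
    [TrivialStar R] {M : Matrix n n R} (hM : (M + Mᵀ).PosDef) : IsUnit M := by
  refine mulVec_injective_iff_isUnit.mp fun x y hxy => sub_eq_zero.mp ?_
  by_contra hxy_ne
  have hMz : M *ᵥ (x - y) = 0 := by rw [mulVec_sub, hxy, sub_self]
  have hpos := hM.dotProduct_mulVec_pos hxy_ne
  rw [star_trivial, add_mulVec, dotProduct_add, dotProduct_mulVec _ Mᵀ, vecMul_transpose,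
    hMz, dotProduct_zero, zero_dotProduct, add_zero] at hpos
  exact hpos.false

theorem inv_mulVec_splitting_eq_self [CommRing R] {A P Q : Matrix n n R}
    (hA : P - Q = A) (hP : IsUnit P) {x f b : n → R} (hx : A *ᵥ x - f = b) :
    P⁻¹ *ᵥ (Q *ᵥ x + f + b) = x := by
  have hPx : Q *ᵥ x + f + b = P *ᵥ x := by
    rw [← hx, ← sub_add_cancel P Q, hA, add_mulVec]; abel
  rw [hPx, mulVec_mulVec, nonsing_inv_mul _ ((isUnit_iff_isUnit_det P).mp hP), one_mulVec]

end Matrix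

theorem ave_solution_is_hss_like_fixed_point (n : ℕ) (A : Matrix (Fin n) (Fin n) ℝ)
    (b : Fin n → ℝ) (α : ℝ) (hα : 0 < α)
    (hH : ((1/2 : ℝ) • (A + Aᵀ)).PosDef)
    (xs : Fin n → ℝ) (hx : A *ᵥ xs - (fun i => |xs i|) = b) :
    (fun x : Fin n → ℝ =>
        (α • (1 : Matrix (Fin n) (Fin n) ℝ) + (1/2 : ℝ) • (A - Aᵀ))⁻¹ *ᵥ
          ((α • (1 : Matrix (Fin n) (Fin n) ℝ) - (1/2 : ℝ) • (A + Aᵀ)) *ᵥ x +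
            (fun i => |x i|) + b))
      ((fun x : Fin n → ℝ =>
        (α • (1 : Matrix (Fin n) (Fin n) ℝ) + (1/2 : ℝ) • (A + Aᵀ))⁻¹ *ᵥ
          ((α • (1 : Matrix (Fin n) (Fin n) ℝ) - (1/2 : ℝ) • (A - Aᵀ)) *ᵥ x +
            (fun i => |x i|) + b)) xs) = xs := by
  set H := (1/2 : ℝ) • (A + Aᵀ) with hH_def
  set S := (1/2 : ℝ) • (A - Aᵀ) with hS_def
  set I : Matrix (Fin n) (Fin n) ℝ := 1
  have hαI : (α • I).PosDef := PosDef.one.smul hα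
  have hαH : IsUnit (α • I + H) := by
    refine isUnit_of_posDef_add_transpose ?_
    have hsymm : α • I + H + (α • I + H)ᵀ = (2 : ℝ) • (α • I + H) := by
      simp only [hH_def, I, transpose_add, transpose_smul, transpose_transpose, transpose_one]
      module
    exact hsymm ▸ (hαI.add hH).smul two_pos
  have hαS : IsUnit (α • I + S) := by
    refine isUnit_of_posDef_add_transpose ?_
    have hsymm : α • I + S + (α • I + S)ᵀ = (2 : ℝ) • (α • I) := by
      simp only [hS_def, I, transpose_add, transpose_sub, transpose_smul, transpose_transpose,
        transpose_one]
      module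
    exact hsymm ▸ hαI.smul two_pos
  have hsplitH : α • I + H - (α • I - S) = A := by simp only [hH_def, hS_def]; module
  have hsplitS : α • I + S - (α • I - H) = A := by simp only [hH_def, hS_def]; module
  beta_reduce
  rw [inv_mulVec_splitting_eq_self hsplitH hαH hx, inv_mulVec_splitting_eq_self hsplitS hαS hx]
end
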